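/- On the polynomial Poisson algebra ℝ[J_a] of sl(2,ℝ)* with brackets {J₀,J₊} = J₊, {J₀,J₋} = -J₋, {J₊,J₋} = 2J₀, any polynomial P(J₀,J₊,J₋) that Poisson-commutes with J₋ and with J₀ is a polynomial in J₋ and the Casimir element W = J₊J₋ + J₀². -/

import Mathlib

/-!
The Hamiltonian vector field of `J₀` is `J₋ ∂₋ - J₊ ∂₊`, so `{P, J₀} = 0` says that every monomial
of `P` has equal degrees in `J₊` and `J₋`, i.e. `P = g(J₀, J₊J₋)`. The Hamiltonian vector field of
`J₋` is `2J₀ ∂₊ - J₋ ∂₀`; on `g(a, c)` it becomes the transport equation `∂_a g = 2a ∂_c g`, whose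
characteristics are the level sets of `c + a²`. Hence `g(a, c) = h(c + a²)` and `P = h(W)`.
-/

open MvPolynomial

/-- Variables: `0 ↦ J₀`, `1 ↦ J₊`, `2 ↦ J₋`.  The Kirillov–Poisson bracket of
sl(2,ℝ)*: the unique antisymmetric biderivation on `ℝ[J₀,J₊,J₋]` with
`{J₀,J₊} = J₊`, `{J₀,J₋} = -J₋`, `{J₊,J₋} = 2J₀`. -/
noncomputable def sl2PB (P Q : MvPolynomial (Fin 3) ℝ) : MvPolynomial (Fin 3) ℝ :=
  X 1 * (pderiv 0 P * pderiv 1 Q - pderiv 1 P * pderiv 0 Q)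
  - X 2 * (pderiv 0 P * pderiv 2 Q - pderiv 2 P * pderiv 0 Q)
  + 2 * X 0 * (pderiv 1 P * pderiv 2 Q - pderiv 2 P * pderiv 1 Q)

section Derivatives

variable {R σ : Type*}

lemma coeff_X_mul_pderiv [CommSemiring R] (i : σ) (p : MvPolynomial σ R) (m : σ →₀ ℕ) :
    coeff m (X i * pderiv i p) = m i * coeff m p := by
  classical
  induction p using MvPolynomial.induction_on' with
  | monomial n a =>
    rw [X_mul_pderiv_monomial, coeff_smul, coeff_monomial]
    split_ifs with h <;> simp [h, nsmul_eq_mul]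
  | add p q hp hq => simp [mul_add, hp, hq]

lemma eq_of_X_mul_pderiv_eq [CommRing R] [IsDomain R] [CharZero R] {i j : σ}
    {p : MvPolynomial σ R} (h : X i * pderiv i p = X j * pderiv j p) {m : σ →₀ ℕ}
    (hm : m ∈ p.support) : m i = m j := by
  have hcoeff := congrArg (coeff m) h
  rw [coeff_X_mul_pderiv, coeff_X_mul_pderiv] at hcoeff
  exact_mod_cast mul_right_cancel₀ (mem_support_iff.mp hm) hcoeff

lemma notMem_vars_of_pderiv_eq_zero [CommRing R] [IsDomain R] [CharZero R] {i : σ}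
    {p : MvPolynomial σ R} (h : pderiv i p = 0) : i ∉ p.vars := by
  rw [mem_vars_iff_mem_support]
  rintro ⟨d, hd, hi⟩
  have hcoeff := coeff_pderiv (i := i) p (d - Finsupp.single i 1)
  rw [h, coeff_zero, Finsupp.sub_add_single_one_cancel (Finsupp.mem_support_iff.mp hi)] at hcoeff
  exact mem_support_iff.mp hd <|
    (mul_eq_zero.mp hcoeff.symm).resolve_right (Nat.cast_add_one_ne_zero _)

lemma pderiv_aeval [CommSemiring R] {τ : Type*} [Fintype σ] (f : σ → MvPolynomial τ R) (i : τ)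
    (q : MvPolynomial σ R) :
    pderiv i (aeval f q) = ∑ j, aeval f (pderiv j q) * pderiv i (f j) := by
  classical
  induction q using MvPolynomial.induction_on with
  | C a => simp
  | add p q hp hq => simp only [map_add, hp, hq, add_mul, Finset.sum_add_distrib]
  | mul_X p j hp =>
    simp only [map_mul, aeval_X, pderiv_mul, hp, pderiv_X, Pi.single_apply, mul_ite, mul_one,
      mul_zero, map_add, add_mul, Finset.sum_add_distrib, Finset.sum_mul, ite_mul, zero_mul,
      apply_ite (aeval f), map_zero, Finset.sum_ite_eq, Finset.mem_univ, if_true]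
    exact congrArg (· + _) (Finset.sum_congr rfl fun _ _ => mul_right_comm _ _ _)

end Derivatives

section Substitutions

variable {R : Type*}

lemma exists_aeval_X_zero_X_one_mul_X_two_eq [CommSemiring R] {P : MvPolynomial (Fin 3) R}
    (h : ∀ m ∈ P.support, m 1 = m 2) :
    ∃ g : MvPolynomial (Fin 2) R, aeval ![(X 0 : MvPolynomial (Fin 3) R), X 1 * X 2] g = P := by
  rw [← AlgHom.mem_range, P.as_sum]
  refine Subalgebra.sum_mem _ fun m hm => ⟨C (coeff m P) * X 0 ^ m 0 * X 1 ^ m 1, ?_⟩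
  rw [monomial_eq, Finsupp.prod_fintype _ _ fun _ => pow_zero _, Fin.prod_univ_three, ← h m hm]
  simp [mul_pow, mul_assoc]

/-- Setting `J₋ = 1` turns this substitution into the inclusion `R[a, c] → R[J₀, J₊, J₋]`. -/
lemma aeval_X_zero_X_one_mul_X_two_injective [CommSemiring R] :
    Function.Injective (aeval (R := R) ![(X 0 : MvPolynomial (Fin 3) R), X 1 * X 2]) := by
  let setJminusOne := aeval (R := R) ![(X 0 : MvPolynomial (Fin 3) R), X 1, 1]
  have hcomp : setJminusOne.comp (aeval ![X 0, X 1 * X 2]) = rename Fin.castSucc := by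
    ext i
    fin_cases i <;> simp [setJminusOne, Fin.castSucc]
  refine Function.Injective.of_comp (f := setJminusOne) ?_
  rw [← AlgHom.coe_comp, hcomp]
  exact rename_injective _ (Fin.castSucc_injective 2)

lemma pderiv_zero_aeval_X_zero_X_one_mul_X_two [CommSemiring R] (g : MvPolynomial (Fin 2) R) :
    pderiv 0 (aeval ![(X 0 : MvPolynomial (Fin 3) R), X 1 * X 2] g) =
      aeval ![X 0, X 1 * X 2] (pderiv 0 g) := by
  rw [pderiv_aeval, Fin.sum_univ_two]
  simp

lemma pderiv_one_aeval_X_zero_X_one_mul_X_two [CommSemiring R] (g : MvPolynomial (Fin 2) R) :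
    pderiv 1 (aeval ![(X 0 : MvPolynomial (Fin 3) R), X 1 * X 2] g) =
      aeval ![X 0, X 1 * X 2] (pderiv 1 g) * X 2 := by
  rw [pderiv_aeval, Fin.sum_univ_two]
  simp

lemma pderiv_zero_eq_of_aeval_X_zero_X_one_mul_X_two [CommRing R] [IsDomain R]
    {g : MvPolynomial (Fin 2) R}
    (h : X 2 * pderiv 0 (aeval ![(X 0 : MvPolynomial (Fin 3) R), X 1 * X 2] g) =
      2 * X 0 * pderiv 1 (aeval ![(X 0 : MvPolynomial (Fin 3) R), X 1 * X 2] g)) :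
    pderiv 0 g = 2 * X 0 * pderiv 1 g := by
  apply aeval_X_zero_X_one_mul_X_two_injective
  apply mul_left_cancel₀ (X_ne_zero (2 : Fin 3))
  rw [pderiv_zero_aeval_X_zero_X_one_mul_X_two, pderiv_one_aeval_X_zero_X_one_mul_X_two] at h
  simp only [map_mul, map_ofNat, aeval_X, Matrix.cons_val_zero]
  linear_combination h

lemma exists_eq_aeval_X_one_add_X_zero_sq [CommRing R] [IsDomain R] [CharZero R]
    {g : MvPolynomial (Fin 2) R} (hg : pderiv 0 g = 2 * X 0 * pderiv 1 g) :
    ∃ h : MvPolynomial (Fin 2) R, 0 ∉ h.vars ∧ g = aeval ![X 0, X 1 + X 0 ^ 2] h := by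
  refine ⟨aeval ![X 0, X 1 - X 0 ^ 2] g, notMem_vars_of_pderiv_eq_zero ?_, ?_⟩
  · rw [pderiv_aeval, Fin.sum_univ_two]
    simp [hg, map_ofNat]
    ring
  · rw [comp_aeval_apply]
    conv_lhs => rw [← aeval_X_left_apply g]
    congr 2
    funext i
    fin_cases i <;> simp

end Substitutions

lemma sl2PB_X_zero (P : MvPolynomial (Fin 3) ℝ) :
    sl2PB P (X 0) = X 2 * pderiv 2 P - X 1 * pderiv 1 P := by
  simp [sl2PB]
  ring

lemma sl2PB_X_two (P : MvPolynomial (Fin 3) ℝ) :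
    sl2PB P (X 2) = 2 * X 0 * pderiv 1 P - X 2 * pderiv 0 P := by
  simp [sl2PB]
  ring

/-- Any polynomial in `J₀, J₊, J₋` which Poisson-commutes with `J₋` and with
`J₀` is a polynomial in `J₋` and the Casimir `W = J₊J₋ + J₀²`. -/
theorem sl2_commutant_generated_by_Jminus_and_W
    (P : MvPolynomial (Fin 3) ℝ)
    (hm : sl2PB P (X 2) = 0) (h0 : sl2PB P (X 0) = 0) :
    ∃ F : MvPolynomial (Fin 2) ℝ,
      P = aeval ![(X 2 : MvPolynomial (Fin 3) ℝ), X 1 * X 2 + (X 0)^2] F := by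
  have hweight : X 1 * pderiv 1 P = X 2 * pderiv 2 P := by
    linear_combination -(sl2PB_X_zero P).symm.trans h0
  obtain ⟨g, rfl⟩ := exists_aeval_X_zero_X_one_mul_X_two_eq fun _ => eq_of_X_mul_pderiv_eq hweight
  obtain ⟨h, hvars, rfl⟩ := exists_eq_aeval_X_one_add_X_zero_sq
    (pderiv_zero_eq_of_aeval_X_zero_X_one_mul_X_two
      (by linear_combination -(sl2PB_X_two _).symm.trans hm))
  refine ⟨h, ?_⟩
  rw [comp_aeval_apply]
  refine hom_congr_vars (f₁ := (aeval _).toRingHom) (f₂ := (aeval _).toRingHom)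
    (by ext; simp) (fun i hi _ => ?_) rfl
  obtain rfl : i = 1 := by
    fin_cases i
    exacts [absurd hi hvars, rfl]
  simp
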